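/- Original-DRESS distinguishes the prism graph from K_{3,3} (Theorem 2): let d_P be any symmetric fixed point of the Original-DRESS update on the prism graph K_3 □ K_2 that is strictly positive on all pairs (u,x) with x ∈ N[u], and let d_K be any such symmetric fixed point on the complete bipartite graph K_{3,3}. Then the multiset of the 9 edge values {d_P(u,v) : u ~ v} of the prism differs from the multiset of the 9 edge values {d_K(u,v) : u ~ v} of K_{3,3}. In particular, d_P takes at least two distinct values on edges while d_K is constant (equal to 2/√3) on edges. -/

import Mathlib

open Finset

/-- The closed neighborhood `N[u] = N(u) ∪ {u}` of a vertex. -/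
def closedNbhd {V : Type*} [Fintype V] [DecidableEq V]
    (G : SimpleGraph V) [DecidableRel G.Adj] (u : V) : Finset V :=
  insert u (G.neighborFinset u)

/-- The vertex norm `‖u‖_d = sqrt (∑_{x ∈ N[u]} d u x)`. -/
noncomputable def vnorm {V : Type*} [Fintype V] [DecidableEq V]
    (G : SimpleGraph V) [DecidableRel G.Adj] (d : V → V → ℝ) (u : V) : ℝ :=
  Real.sqrt (∑ x ∈ closedNbhd G u, d u x)

/-- The Original-DRESS update operator. -/
noncomputable def dress {V : Type*} [Fintype V] [DecidableEq V]
    (G : SimpleGraph V) [DecidableRel G.Adj] (d : V → V → ℝ) (u v : V) : ℝ :=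
  (∑ x ∈ closedNbhd G u ∩ closedNbhd G v, (d u x + d x v)) /
    (vnorm G d u * vnorm G d v)

/-- The multiset of edge values of a symmetric function `d` on a graph. -/
noncomputable def edgeValues {V : Type*} [Fintype V] [DecidableEq V]
    (G : SimpleGraph V) [DecidableRel G.Adj]
    (d : V → V → ℝ) (hsym : ∀ u v, d u v = d v u) : Multiset ℝ :=
  G.edgeFinset.val.map (Sym2.lift ⟨d, fun a b => (hsym b a).symm⟩)

/-- The prism graph: the box (Cartesian) product `K_3 □ K_2`. -/
abbrev Prism : SimpleGraph (Fin 3 × Fin 2) :=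
  (⊤ : SimpleGraph (Fin 3)) □ (⊤ : SimpleGraph (Fin 2))

noncomputable instance : DecidableRel Prism.Adj := Classical.decRel _

/-- The complete bipartite graph `K_{3,3}` on `Fin 3 ⊕ Fin 3`. -/
abbrev K33 : SimpleGraph (Fin 3 ⊕ Fin 3) := completeBipartiteGraph (Fin 3) (Fin 3)

noncomputable instance : DecidableRel K33.Adj := Classical.decRel _

/-!
At a positive symmetric fixed point the diagonal is `2`, and on an edge `uv` the fixed-point
equation reads `d(u,v) ‖u‖ ‖v‖ = 4 + 2 d(u,v) + ∑_{x ∈ N(u) ∩ N(v)} (d(u,x) + d(x,v))`.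

On the `3`-regular prism a constant edge value `c` would give `c (2 + 3c) = 4 + 2c + 2ct` on every
edge, where `t` is the number of triangles through the edge; but `t = 0` on the edges between the
two triangles and `t = 1` on the others.

`K_{3,3}` is triangle-free, so `d(i,j) (‖i‖ ‖j‖ - 2) = 4`. Thus `d(i,j)` decreases as `‖i‖`
grows, and so does `‖i‖² = 2 + ∑_j d(i,j)`: all `‖i‖` agree, and likewise all `‖j‖`. Hence `d`
is a constant `c` on edges, with `c · 3c = 4`.
-/

open SimpleGraph

structure IsPosDressFixedPoint {V : Type*} [Fintype V] [DecidableEq V]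
    (G : SimpleGraph V) [DecidableRel G.Adj] (d : V → V → ℝ) : Prop where
  symm : ∀ u v, d u v = d v u
  pos : ∀ u x, x ∈ closedNbhd G u → 0 < d u x
  fixed : ∀ u v, v ∈ closedNbhd G u → dress G d u v = d u v

section ClosedNbhd

variable {V : Type*} [Fintype V] [DecidableEq V] {G : SimpleGraph V} [DecidableRel G.Adj]

lemma self_mem_closedNbhd (u : V) : u ∈ closedNbhd G u := mem_insert_self _ _

lemma mem_closedNbhd_of_adj {u v : V} (h : G.Adj u v) : v ∈ closedNbhd G u :=
  mem_insert_of_mem ((mem_neighborFinset _ _ _).2 h)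

lemma sum_closedNbhd (f : V → ℝ) (u : V) :
    ∑ x ∈ closedNbhd G u, f x = f u + ∑ x ∈ G.neighborFinset u, f x :=
  sum_insert (notMem_neighborFinset_self _ _)

lemma closedNbhd_inter_closedNbhd_of_adj {u v : V} (h : G.Adj u v) :
    closedNbhd G u ∩ closedNbhd G v =
      cons u (cons v (G.neighborFinset u ∩ G.neighborFinset v) (by simp [mem_neighborFinset]))
        (by simp [h.ne, mem_neighborFinset]) := by
  ext x
  simp only [closedNbhd, cons_eq_insert, mem_inter, mem_insert, mem_neighborFinset]
  constructor
  · rintro ⟨rfl | hux, rfl | hvx⟩ <;> tauto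
  · rintro (rfl | rfl | ⟨hux, hvx⟩)
    · exact ⟨.inl rfl, .inr h.symm⟩
    · exact ⟨.inr h, .inl rfl⟩
    · exact ⟨.inr hux, .inr hvx⟩

end ClosedNbhd

namespace IsPosDressFixedPoint

variable {V : Type*} [Fintype V] [DecidableEq V] {G : SimpleGraph V} [DecidableRel G.Adj]
  {d : V → V → ℝ}

lemma sum_closedNbhd_pos (hd : IsPosDressFixedPoint G d) (u : V) :
    0 < ∑ x ∈ closedNbhd G u, d u x :=
  sum_pos (hd.pos u) ⟨u, self_mem_closedNbhd u⟩

lemma vnorm_pos (hd : IsPosDressFixedPoint G d) (u : V) : 0 < vnorm G d u :=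
  Real.sqrt_pos.2 (hd.sum_closedNbhd_pos u)

lemma self_eq_two (hd : IsPosDressFixedPoint G d) (u : V) : d u u = 2 := by
  have hS := hd.sum_closedNbhd_pos u
  have hfix := hd.fixed u u (self_mem_closedNbhd u)
  have hsum : ∑ x ∈ closedNbhd G u, (d u x + d x u) = 2 * ∑ x ∈ closedNbhd G u, d u x := by
    simp only [hd.symm _ u, ← two_mul, mul_sum]
  rw [dress, inter_self, hsum, vnorm, Real.mul_self_sqrt hS.le] at hfix
  rw [← hfix, mul_div_cancel_right₀ _ hS.ne']

lemma vnorm_sq (hd : IsPosDressFixedPoint G d) (u : V) :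
    vnorm G d u ^ 2 = 2 + ∑ x ∈ G.neighborFinset u, d u x := by
  rw [vnorm, Real.sq_sqrt (hd.sum_closedNbhd_pos u).le, sum_closedNbhd, hd.self_eq_two]

lemma mul_vnorm_mul_vnorm (hd : IsPosDressFixedPoint G d) {u v : V} (h : G.Adj u v) :
    d u v * (vnorm G d u * vnorm G d v) =
      4 + 2 * d u v + ∑ x ∈ G.neighborFinset u ∩ G.neighborFinset v, (d u x + d x v) := by
  have hfix := hd.fixed u v (mem_closedNbhd_of_adj h)
  rw [dress, div_eq_iff (mul_pos (hd.vnorm_pos u) (hd.vnorm_pos v)).ne'] at hfix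
  rw [← hfix, closedNbhd_inter_closedNbhd_of_adj h, sum_cons, sum_cons,
    hd.self_eq_two, hd.self_eq_two]
  ring

lemma vnorm_sq_of_isRegularOfDegree (hd : IsPosDressFixedPoint G d) {k : ℕ}
    (hG : G.IsRegularOfDegree k) {c : ℝ} (hc : ∀ u v, G.Adj u v → d u v = c) (u : V) :
    vnorm G d u ^ 2 = 2 + k * c := by
  rw [hd.vnorm_sq, sum_congr rfl fun x hx => hc u x ((mem_neighborFinset _ _ _).1 hx),
    sum_const, card_neighborFinset_eq_degree, hG.degree_eq, nsmul_eq_mul]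

lemma card_closedNbhd_inter_eq_of_isRegularOfDegree (hd : IsPosDressFixedPoint G d) {k : ℕ}
    (hG : G.IsRegularOfDegree k) {c : ℝ} (hc : ∀ u v, G.Adj u v → d u v = c)
    {u v u' v' : V} (h : G.Adj u v) (h' : G.Adj u' v') :
    #(closedNbhd G u ∩ closedNbhd G v) = #(closedNbhd G u' ∩ closedNbhd G v') := by
  have hc_pos : 0 < c := hc u v h ▸ hd.pos u v (mem_closedNbhd_of_adj h)
  -- On an edge lying in `t` triangles the fixed-point equation reads `c (2 + k c) = 4 + 2c + 2ct`.
  have edge_eq : ∀ u v, G.Adj u v →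
      c * (2 + k * c) = 4 + 2 * c + 2 * c * #(G.neighborFinset u ∩ G.neighborFinset v) := by
    intro u v h
    have hnorm := hd.vnorm_sq_of_isRegularOfDegree hG hc
    have huv : vnorm G d u = vnorm G d v := by
      rw [← sq_eq_sq₀ (hd.vnorm_pos u).le (hd.vnorm_pos v).le, hnorm, hnorm]
    have hsum : ∑ x ∈ G.neighborFinset u ∩ G.neighborFinset v, (d u x + d x v) =
        2 * c * #(G.neighborFinset u ∩ G.neighborFinset v) := by
      calc ∑ x ∈ G.neighborFinset u ∩ G.neighborFinset v, (d u x + d x v)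
          = ∑ _x ∈ G.neighborFinset u ∩ G.neighborFinset v, 2 * c := sum_congr rfl fun x hx => by
            simp only [mem_inter, mem_neighborFinset] at hx
            rw [hc u x hx.1, hc x v hx.2.symm, two_mul]
        _ = _ := by rw [sum_const, nsmul_eq_mul, mul_comm]
    have key := hd.mul_vnorm_mul_vnorm h
    rw [← huv, ← sq, hnorm, hsum, hc u v h] at key
    exact key
  have hcard : #(G.neighborFinset u ∩ G.neighborFinset v) =
      #(G.neighborFinset u' ∩ G.neighborFinset v') := by
    exact_mod_cast mul_left_cancel₀ (mul_ne_zero two_ne_zero hc_pos.ne')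
      (add_left_cancel ((edge_eq u v h).symm.trans (edge_eq u' v' h')))
  rw [closedNbhd_inter_closedNbhd_of_adj h, closedNbhd_inter_closedNbhd_of_adj h', card_cons,
    card_cons, card_cons, card_cons, hcard]

end IsPosDressFixedPoint

lemma SimpleGraph.IsRegularOfDegree.boxProd {α β : Type*} {G : SimpleGraph α}
    {H : SimpleGraph β} [Fintype α] [Fintype β] [DecidableRel G.Adj] [DecidableRel H.Adj]
    -- implicit, so as to unify with whatever instance the product graph carries
    {_ : ∀ x, Fintype ((G □ H).neighborSet x)} {k l : ℕ} (hG : G.IsRegularOfDegree k)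
    (hH : H.IsRegularOfDegree l) : (G □ H).IsRegularOfDegree (k + l) := fun x => by
  rw [degree_boxProd, hG.degree_eq, hH.degree_eq]

lemma prism_closedNbhd_inter_vertical :
    closedNbhd Prism (0, 0) ∩ closedNbhd Prism (0, 1) = {(0, 0), (0, 1)} := by
  ext ⟨a, b⟩
  simp [closedNbhd, mem_neighborFinset, boxProd_adj]
  omega

lemma prism_closedNbhd_inter_triangle :
    closedNbhd Prism (0, 0) ∩ closedNbhd Prism (1, 0) = {(0, 0), (1, 0), (2, 0)} := by
  ext ⟨a, b⟩
  simp [closedNbhd, mem_neighborFinset, boxProd_adj]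
  omega

lemma IsPosDressFixedPoint.prism_exists_adj_ne {d : Fin 3 × Fin 2 → Fin 3 × Fin 2 → ℝ}
    (hd : IsPosDressFixedPoint Prism d) :
    ∃ u v u' v', Prism.Adj u v ∧ Prism.Adj u' v' ∧ d u v ≠ d u' v' := by
  have vertical : Prism.Adj (0, 0) (0, 1) := by simp [boxProd_adj]
  have triangle : Prism.Adj (0, 0) (1, 0) := by simp [boxProd_adj]
  by_contra! hconst
  have := hd.card_closedNbhd_inter_eq_of_isRegularOfDegree
    (IsRegularOfDegree.top.boxProd IsRegularOfDegree.top)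
    (fun u v h => hconst u v _ _ h vertical) vertical triangle
  rw [prism_closedNbhd_inter_vertical, prism_closedNbhd_inter_triangle] at this
  simp at this

/-- `e i j = 4 / (n i * m j - 2)` is antitone in `n i`, hence so is `n i ^ 2 = 2 + ∑ j, e i j`;
therefore all `n i` agree. -/
lemma eq_of_mul_sub_two_eq_four {α β : Type*} [Fintype β] {e : α → β → ℝ} {n : α → ℝ}
    {m : β → ℝ} (he : ∀ i j, 0 < e i j) (hn : ∀ i, 0 ≤ n i) (hm : ∀ j, 0 ≤ m j)
    (hrow : ∀ i, n i ^ 2 = 2 + ∑ j, e i j) (hedge : ∀ i j, e i j * (n i * m j - 2) = 4)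
    (i i' : α) (j : β) : e i j = e i' j := by
  have hden : ∀ i j, 0 < n i * m j - 2 := fun i j =>
    pos_of_mul_pos_right ((hedge i j).symm ▸ four_pos) (he i j).le
  have he_eq : ∀ i j, e i j = 4 / (n i * m j - 2) := fun i j => by
    rw [eq_div_iff (hden i j).ne', hedge]
  suffices hn_eq : n i = n i' by rw [he_eq, he_eq, hn_eq]
  wlog hle : n i ≤ n i' generalizing i i'
  · exact (this i' i (le_of_not_ge hle)).symm
  refine le_antisymm hle ((pow_le_pow_iff_left₀ (hn i') (hn i) two_ne_zero).1 ?_)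
  rw [hrow, hrow]
  gcongr with j
  rw [he_eq, he_eq]
  have := hden i j
  gcongr
  exact hm j

section CompleteBipartite

open Sum

variable {α β : Type*} [Fintype α] [Fintype β] [DecidableRel (completeBipartiteGraph α β).Adj]

lemma completeBipartiteGraph_neighborFinset_inl (i : α) :
    (completeBipartiteGraph α β).neighborFinset (inl i) = univ.map .inr := by
  ext (x | x) <;> simp [mem_neighborFinset]

lemma completeBipartiteGraph_neighborFinset_inr (j : β) :
    (completeBipartiteGraph α β).neighborFinset (inr j) = univ.map .inl := by
  ext (x | x) <;> simp [mem_neighborFinset]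

namespace IsPosDressFixedPoint

variable [DecidableEq α] [DecidableEq β] {d : α ⊕ β → α ⊕ β → ℝ}
  (hd : IsPosDressFixedPoint (completeBipartiteGraph α β) d)
include hd

lemma completeBipartite_vnorm_inl_sq (i : α) :
    vnorm (completeBipartiteGraph α β) d (inl i) ^ 2 = 2 + ∑ j, d (inl i) (inr j) := by
  rw [hd.vnorm_sq, completeBipartiteGraph_neighborFinset_inl, sum_map]
  rfl

lemma completeBipartite_vnorm_inr_sq (j : β) :
    vnorm (completeBipartiteGraph α β) d (inr j) ^ 2 = 2 + ∑ i, d (inl i) (inr j) := by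
  rw [hd.vnorm_sq, completeBipartiteGraph_neighborFinset_inr, sum_map]
  simp only [Function.Embedding.inl_apply, hd.symm (inr j)]

lemma completeBipartite_mul_vnorm_sub_two (i : α) (j : β) :
    d (inl i) (inr j) * (vnorm (completeBipartiteGraph α β) d (inl i) *
      vnorm (completeBipartiteGraph α β) d (inr j) - 2) = 4 := by
  have hedge := hd.mul_vnorm_mul_vnorm (u := inl i) (v := inr j) (by simp)
  have triangle_free : (completeBipartiteGraph α β).neighborFinset (inl i) ∩
      (completeBipartiteGraph α β).neighborFinset (inr j) = ∅ := by
    ext (x | x) <;> simp [mem_neighborFinset]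
  rw [triangle_free, sum_empty] at hedge
  linarith

lemma completeBipartite_edge_eq (i i' : α) (j j' : β) :
    d (inl i) (inr j) = d (inl i') (inr j') := by
  have he : ∀ i j, 0 < d (inl i) (inr j) := fun i j =>
    hd.pos _ _ (mem_closedNbhd_of_adj (by simp))
  have hn : ∀ i, 0 ≤ vnorm (completeBipartiteGraph α β) d (inl i) := fun _ => Real.sqrt_nonneg _
  have hm : ∀ j, 0 ≤ vnorm (completeBipartiteGraph α β) d (inr j) := fun _ => Real.sqrt_nonneg _
  calc d (inl i) (inr j) = d (inl i') (inr j) :=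
        eq_of_mul_sub_two_eq_four he hn hm hd.completeBipartite_vnorm_inl_sq
          hd.completeBipartite_mul_vnorm_sub_two i i' j
    _ = d (inl i') (inr j') :=
        eq_of_mul_sub_two_eq_four (fun j i => he i j) hm hn hd.completeBipartite_vnorm_inr_sq
          (fun j i => mul_comm (vnorm (completeBipartiteGraph α β) d (inr j)) _ ▸
            hd.completeBipartite_mul_vnorm_sub_two i j)
          j j' i'

end IsPosDressFixedPoint

theorem IsPosDressFixedPoint.completeBipartite_eq_two_div_sqrt_card {α : Type*} [Fintype α]
    [DecidableEq α] [DecidableRel (completeBipartiteGraph α α).Adj] {d : α ⊕ α → α ⊕ α → ℝ}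
    (hd : IsPosDressFixedPoint (completeBipartiteGraph α α) d) {u v : α ⊕ α}
    (h : (completeBipartiteGraph α α).Adj u v) :
    d u v = 2 / √(Fintype.card α) := by
  have edge_val : ∀ i j, d (inl i) (inr j) = 2 / √(Fintype.card α) := by
    intro i j
    set c := d (inl i) (inr j)
    have hc : ∀ i' j', d (inl i') (inr j') = c := fun i' j' =>
      hd.completeBipartite_edge_eq i' i j' j
    have hc_pos : 0 < c := hd.pos _ _ (mem_closedNbhd_of_adj (by simp))
    have hn := hd.completeBipartite_vnorm_inl_sq i
    have hm := hd.completeBipartite_vnorm_inr_sq j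
    simp only [hc, sum_const, card_univ, nsmul_eq_mul] at hn hm
    have hnm : vnorm (completeBipartiteGraph α α) d (inl i) =
        vnorm (completeBipartiteGraph α α) d (inr j) := by
      rw [← sq_eq_sq₀ (hd.vnorm_pos _).le (hd.vnorm_pos _).le, hn, hm]
    have hedge := hd.completeBipartite_mul_vnorm_sub_two i j
    rw [← hnm, ← sq, hn] at hedge
    have ha : 0 < (Fintype.card α : ℝ) := Nat.cast_pos.2 (Fintype.card_pos_iff.2 ⟨i⟩)
    have hs := Real.sqrt_pos.2 ha
    rw [eq_div_iff hs.ne', ← sq_eq_sq₀ (by positivity) zero_le_two, mul_pow, Real.sq_sqrt ha.le]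
    linear_combination hedge
  rcases u with i | i <;> rcases v with j | j <;> simp at h
  · exact edge_val i j
  · rw [hd.symm]
    exact edge_val j i

end CompleteBipartite

lemma mem_edgeValues_iff {V : Type*} [Fintype V] [DecidableEq V] {G : SimpleGraph V}
    [DecidableRel G.Adj] {d : V → V → ℝ} {hsym : ∀ u v, d u v = d v u} {r : ℝ} :
    r ∈ edgeValues G d hsym ↔ ∃ u v, G.Adj u v ∧ d u v = r := by
  simp [edgeValues, Sym2.exists, mem_edgeFinset]

/-- Original-DRESS distinguishes the prism graph from `K_{3,3}` (Theorem 2):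
for any symmetric positive DRESS fixed points `dP` on the prism and `dK` on
`K_{3,3}`, the multisets of edge values differ; moreover `dP` takes at least
two distinct edge values while `dK` is constantly `2/√3` on edges. -/
theorem dress_distinguishes_prism_from_K33
    (dP : (Fin 3 × Fin 2) → (Fin 3 × Fin 2) → ℝ)
    (hPsym : ∀ u v, dP u v = dP v u)
    (hPpos : ∀ u x, x ∈ closedNbhd Prism u → 0 < dP u x)
    (hPfix : ∀ u v, v ∈ closedNbhd Prism u → dress Prism dP u v = dP u v)
    (dK : (Fin 3 ⊕ Fin 3) → (Fin 3 ⊕ Fin 3) → ℝ)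
    (hKsym : ∀ u v, dK u v = dK v u)
    (hKpos : ∀ u x, x ∈ closedNbhd K33 u → 0 < dK u x)
    (hKfix : ∀ u v, v ∈ closedNbhd K33 u → dress K33 dK u v = dK u v) :
    edgeValues Prism dP hPsym ≠ edgeValues K33 dK hKsym ∧
    (∃ u v u' v', Prism.Adj u v ∧ Prism.Adj u' v' ∧ dP u v ≠ dP u' v') ∧
    (∀ u v, K33.Adj u v → dK u v = 2 / Real.sqrt 3) := by
  have hK : ∀ u v, K33.Adj u v → dK u v = 2 / Real.sqrt 3 := fun u v h => by
    simpa using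
      (IsPosDressFixedPoint.mk hKsym hKpos hKfix).completeBipartite_eq_two_div_sqrt_card h
  obtain ⟨u, v, u', v', h, h', hne⟩ :=
    (IsPosDressFixedPoint.mk hPsym hPpos hPfix).prism_exists_adj_ne
  refine ⟨fun heq => hne ?_, ⟨u, v, u', v', h, h', hne⟩, hK⟩
  have hK_const : ∀ r ∈ edgeValues Prism dP hPsym, r = 2 / Real.sqrt 3 := by
    rw [heq]
    rintro r hr
    obtain ⟨a, b, hab, rfl⟩ := mem_edgeValues_iff.1 hr
    exact hK a b hab
  rw [hK_const _ (mem_edgeValues_iff.2 ⟨u, v, h, rfl⟩),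
    hK_const _ (mem_edgeValues_iff.2 ⟨u', v', h', rfl⟩)]
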